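/- arXiv:2203.11342 — 5 statements merged into one kernel-verified Lean document; each statement's English description precedes it below -/
import Mathlib

section
/- For every positive integer n and every real ε with 0 < ε < 1, ∫_ε^1 dt/(t^{2n+1}·sinh t) = − Σ_{k=0}^∞ (2^{2k}−2)·B_{2k}·(1 − ε^{2k−2n−1})/((2k)!·(2k−2n−1)), where the series converges. -/
/-!
Multiplying the generating function `B(x) = x / (eˣ - 1) = ∑ Bᵢ xⁱ / i!` by `eˣ - e⁻ˣ` gives
`(2 B(x) - B(2x)) (eˣ - e⁻ˣ) = 2x`, i.e. `t / sinh t = ∑ (2 - 2^{2k}) B_{2k} t^{2k} / (2k)!`.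
The Euler–zeta formula bounds `|B_{2k}| / (2k)!` by a multiple of `(2π)^{-2k}`, so this series
converges for `|t| < π`, uniformly on `[ε, 1]` after division by `t^{2n+2}`, and may be integrated
term by term; each term integrates to a power of `ε`.
-/

open Real MeasureTheory Filter Finset intervalIntegral

open scoped Nat

open PowerSeries in
theorem two_mul_bernoulliPowerSeries_sub_rescale_mul_exp_sub_exp_neg
    (A : Type*) [CommRing A] [Algebra ℚ A] :
    (2 * bernoulliPowerSeries A - rescale 2 (bernoulliPowerSeries A)) *
      (exp A - evalNegHom (exp A)) = 2 * X := by
  set B := bernoulliPowerSeries A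
  set E := exp A
  have hB : B * (E - 1) = X := bernoulliPowerSeries_mul_exp_sub_one A
  have hB₂ : rescale 2 B * (E ^ 2 - 1) = 2 * X := by
    have := congrArg (rescale (2 : A)) hB
    rwa [map_mul, map_sub, map_one, ← Nat.cast_ofNat, ← exp_pow_eq_rescale_exp, rescale_X,
      map_natCast] at this
  have hE : E * evalNegHom E = 1 := exp_mul_exp_neg_eq_one
  calc (2 * B - rescale 2 B) * (E - evalNegHom E)
      = (2 * B - rescale 2 B) * (E ^ 2 - E * evalNegHom E) * evalNegHom E := by
        linear_combination -(2 * B - rescale 2 B) * (E - evalNegHom E) * hE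
    _ = (2 * (B * (E - 1)) * (E + 1) - rescale 2 B * (E ^ 2 - 1)) * evalNegHom E := by
        rw [hE]; ring
    _ = 2 * X := by rw [hB, hB₂]; linear_combination 2 * X * hE

/-- The Taylor coefficients of `t / sinh t`. -/
noncomputable def cschCoeff (i : ℕ) : ℝ := (2 - 2 ^ i) * bernoulli i / (i ! : ℝ)

open PowerSeries in
theorem sum_antidiagonal_cschCoeff_mul (N : ℕ) :
    ∑ p ∈ antidiagonal N, cschCoeff p.1 * ((1 - (-1) ^ p.2) / p.2 !) =
      if N = 1 then 2 else 0 := by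
  have h := congrArg (coeff N) (two_mul_bernoulliPowerSeries_sub_rescale_mul_exp_sub_exp_neg ℝ)
  rw [coeff_mul, ← map_ofNat C 2] at h
  simp only [map_sub, coeff_C_mul, coeff_rescale, coeff_X, bernoulliPowerSeries, coeff_mk,
    evalNegHom, coeff_exp, map_div₀, map_natCast, map_one, eq_ratCast, mul_ite, mul_one,
    mul_zero] at h
  rw [← h]
  refine sum_congr rfl fun p _ => ?_
  simp only [cschCoeff]
  ring

theorem cschCoeff_eq_zero_of_odd {i : ℕ} (hi : Odd i) : cschCoeff i = 0 := by
  obtain rfl | h := eq_or_ne i 1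
  · norm_num [cschCoeff]
  · simp [cschCoeff, bernoulli_eq_zero_of_odd hi (Nat.lt_of_le_of_ne hi.pos h.symm)]

theorem abs_bernoulli_two_mul_div_factorial_le {k : ℕ} (hk : k ≠ 0) :
    |(bernoulli (2 * k) : ℝ)| / (2 * k)! ≤ 6 / (2 * π) ^ (2 * k) := by
  set V : ℝ := (-1) ^ (k + 1) * 2 ^ (2 * k - 1) * π ^ (2 * k) * bernoulli (2 * k) / (2 * k)!
  have hV_nonneg : 0 ≤ V := (hasSum_zeta_nat hk).nonneg fun m => by positivity
  have hV_le : V ≤ π ^ 2 / 6 := by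
    refine hasSum_le (fun m => ?_) (hasSum_zeta_nat hk) hasSum_zeta_two
    rcases eq_or_ne m 0 with rfl | hm
    · simp [hk]
    · exact one_div_le_one_div_of_le (by positivity)
        (pow_le_pow_right₀ (Nat.one_le_cast.2 (Nat.one_le_iff_ne_zero.2 hm)) (by omega))
  have hV_abs : |V| = (2 * π) ^ (2 * k) / 2 * (|(bernoulli (2 * k) : ℝ)| / (2 * k)!) := by
    obtain ⟨j, rfl⟩ : ∃ j, k = j + 1 := ⟨k - 1, by omega⟩
    simp only [V, abs_div, abs_mul, abs_pow, abs_neg, abs_one, one_pow, abs_two,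
      abs_of_pos pi_pos, Nat.abs_cast]
    rw [show 2 * (j + 1) - 1 = 2 * j + 1 by omega, show 2 * (j + 1) = 2 * j + 1 + 1 by omega]
    ring
  rw [le_div_iff₀ (by positivity)]
  nlinarith [abs_of_nonneg hV_nonneg, pi_le_four, pi_pos]

theorem abs_cschCoeff_le (i : ℕ) : |cschCoeff i| ≤ 6 / π ^ i := by
  obtain ⟨k, rfl | rfl⟩ := Nat.even_or_odd' i
  · rcases eq_or_ne k 0 with rfl | hk
    · norm_num [cschCoeff]
    have h2 : |(2 : ℝ) - 2 ^ (2 * k)| ≤ 2 ^ (2 * k) := by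
      have : (2 : ℝ) ≤ 2 ^ (2 * k) := le_self_pow₀ one_le_two (by omega)
      rw [abs_sub_comm, abs_of_nonneg (by linarith)]
      linarith
    calc |cschCoeff (2 * k)|
        = |(2 : ℝ) - 2 ^ (2 * k)| * (|(bernoulli (2 * k) : ℝ)| / (2 * k)!) := by
          rw [cschCoeff, abs_div, abs_mul, Nat.abs_cast, mul_div_assoc]
      _ ≤ 2 ^ (2 * k) * (6 / (2 * π) ^ (2 * k)) := by
          gcongr ?_ * ?_
          exact abs_bernoulli_two_mul_div_factorial_le hk
      _ = 6 / π ^ (2 * k) := by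
          rw [mul_pow]; field_simp
  · rw [cschCoeff_eq_zero_of_odd (odd_two_mul_add_one k), abs_zero]
    positivity

theorem hasSum_two_mul_sinh (t : ℝ) :
    HasSum (fun j => (1 - (-1) ^ j) / j ! * t ^ j) (2 * sinh t) := by
  have hexp (x : ℝ) : HasSum (fun j => x ^ j / j !) (exp x) :=
    exp_eq_exp_ℝ ▸ NormedSpace.expSeries_div_hasSum_exp x
  rw [sinh_eq, mul_div_cancel₀ _ two_ne_zero]
  refine ((hexp t).sub (hexp (-t))).congr_fun fun j => ?_
  rw [neg_pow]
  ring

theorem summable_norm_cschCoeff_mul_pow {t : ℝ} (ht : |t| < π) :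
    Summable fun i => ‖cschCoeff i * t ^ i‖ := by
  refine .of_nonneg_of_le (fun _ => norm_nonneg _) (fun i => ?_)
    ((summable_geometric_of_lt_one (by positivity) ((div_lt_one pi_pos).2 ht)).mul_left 6)
  rw [norm_mul, norm_pow, Real.norm_eq_abs, Real.norm_eq_abs, div_pow, ← mul_div_assoc,
    mul_div_right_comm]
  exact mul_le_mul_of_nonneg_right (abs_cschCoeff_le i) (by positivity)

theorem hasSum_cschCoeff_mul_pow {t : ℝ} (ht₀ : t ≠ 0) (ht : |t| < π) :
    HasSum (fun i => cschCoeff i * t ^ i) (t / sinh t) := by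
  have hc := summable_norm_cschCoeff_mul_pow ht
  have hs := hasSum_two_mul_sinh t
  have hcauchy (N : ℕ) : ∑ p ∈ antidiagonal N,
      cschCoeff p.1 * t ^ p.1 * ((1 - (-1) ^ p.2) / p.2 ! * t ^ p.2) =
        if N = 1 then 2 * t else 0 := by
    calc _ = (∑ p ∈ antidiagonal N, cschCoeff p.1 * ((1 - (-1) ^ p.2) / p.2 !)) * t ^ N := by
          rw [sum_mul]
          refine sum_congr rfl fun p hp => ?_
          rw [← mem_antidiagonal.1 hp, pow_add]
          ring
      _ = _ := by rw [sum_antidiagonal_cschCoeff_mul]; split_ifs with h <;> simp [h]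
  have hprod : (∑' i, cschCoeff i * t ^ i) * (2 * sinh t) = 2 * t := by
    rw [← hs.tsum_eq, tsum_mul_tsum_eq_tsum_sum_antidiagonal_of_summable_norm hc hs.summable.norm,
      tsum_congr hcauchy, tsum_ite_eq]
  have hsum : t / sinh t = ∑' i, cschCoeff i * t ^ i := by
    rw [div_eq_iff (sinh_ne_zero.2 ht₀)]
    linarith
  exact hsum ▸ hc.of_norm.hasSum

theorem hasSum_cschCoeff_two_mul_mul_pow {t : ℝ} (ht₀ : t ≠ 0) (ht : |t| < π) :
    HasSum (fun k => cschCoeff (2 * k) * t ^ (2 * k)) (t / sinh t) := by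
  have h2 : Function.Injective (2 * · : ℕ → ℕ) := mul_right_injective₀ two_ne_zero
  refine (h2.hasSum_iff (f := fun i => cschCoeff i * t ^ i) fun i hi => ?_).2
    (hasSum_cschCoeff_mul_pow ht₀ ht)
  rw [cschCoeff_eq_zero_of_odd, zero_mul]
  exact Nat.not_even_iff_odd.1 fun ⟨k, hk⟩ => hi ⟨k, hk.symm ▸ two_mul k⟩

theorem hasSum_one_div_pow_mul_sinh (m : ℕ) {t : ℝ} (ht₀ : t ≠ 0) (ht : |t| < π) :
    HasSum (fun k => cschCoeff (2 * k) * t ^ (2 * k) / t ^ (m + 1)) (1 / (t ^ m * sinh t)) := by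
  have h : t / sinh t / t ^ (m + 1) = 1 / (t ^ m * sinh t) := by
    rw [pow_succ]
    field_simp
  exact h ▸ (hasSum_cschCoeff_two_mul_mul_pow ht₀ ht).div_const _

theorem integral_pow_div_pow {a b : ℝ} {i j : ℕ} (hij : i + 1 ≠ j)
    (h₀ : (0 : ℝ) ∉ Set.uIcc a b) :
    ∫ t in a..b, t ^ i / t ^ j =
      (b ^ ((i : ℤ) - j + 1) - a ^ ((i : ℤ) - j + 1)) / ((i : ℝ) - j + 1) := by
  have h : ∀ t ∈ Set.uIcc a b, t ^ i / t ^ j = t ^ ((i : ℤ) - j) := fun t ht => by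
    rw [zpow_sub₀ (ne_of_mem_of_not_mem ht h₀), zpow_natCast, zpow_natCast]
  rw [integral_congr h, integral_zpow (.inr ⟨by omega, h₀⟩)]
  push_cast
  ring

theorem hasSum_integral_one_div_pow_mul_sinh (m : ℕ) {a b : ℝ} (ha : 0 < a) (hab : a ≤ b)
    (hb : b < π) :
    HasSum (fun k => ∫ t in a..b, cschCoeff (2 * k) * t ^ (2 * k) / t ^ (m + 1))
      (∫ t in a..b, 1 / (t ^ m * sinh t)) := by
  have hb₀ : 0 < b := ha.trans_le hab
  have hmem {t} (ht : t ∈ Set.uIoc a b) : a < t ∧ t ≤ b := by rwa [Set.uIoc_of_le hab] at ht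
  refine hasSum_integral_of_dominated_convergence
    (fun k _ => |cschCoeff (2 * k)| * b ^ (2 * k) / a ^ (m + 1))
    (fun k => (by fun_prop : Measurable _).aestronglyMeasurable)
    (fun k => ae_of_all _ fun t ht => ?_) (ae_of_all _ fun _ _ => ?_) intervalIntegrable_const
    (ae_of_all _ fun t ht => ?_)
  · obtain ⟨hat, htb⟩ := hmem ht
    have ht₀ : 0 < t := ha.trans hat
    rw [Real.norm_eq_abs, abs_div, abs_mul, abs_pow, abs_pow, abs_of_pos ht₀]
    gcongr
  · have h := (summable_norm_cschCoeff_mul_pow ((abs_of_pos hb₀).trans_lt hb)).comp_injective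
      (mul_right_injective₀ two_ne_zero)
    simpa [abs_of_pos hb₀] using h.div_const (a ^ (m + 1))
  · obtain ⟨hat, htb⟩ := hmem ht
    have ht₀ : 0 < t := ha.trans hat
    exact hasSum_one_div_pow_mul_sinh m ht₀.ne' ((abs_of_pos ht₀).trans_lt (htb.trans_lt hb))

theorem integral_csch_eps_one_general (n : ℕ) (ε : ℝ) (hε0 : 0 < ε)
    (hε1 : ε < 1) :
    Summable (fun k : ℕ =>
        ((2 : ℝ) ^ (2 * k) - 2) * (bernoulli (2 * k) : ℝ) *
            (1 - ε ^ (2 * (k : ℤ) - 2 * (n : ℤ) - 1)) /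
          (((2 * k).factorial : ℝ) * (2 * (k : ℝ) - 2 * (n : ℝ) - 1))) ∧
    (∫ t in ε..1, 1 / (t ^ (2 * n + 1) * Real.sinh t)) =
      -∑' k : ℕ,
          ((2 : ℝ) ^ (2 * k) - 2) * (bernoulli (2 * k) : ℝ) *
              (1 - ε ^ (2 * (k : ℤ) - 2 * (n : ℤ) - 1)) /
            (((2 * k).factorial : ℝ) * (2 * (k : ℝ) - 2 * (n : ℝ) - 1)) := by
  have hterm (k : ℕ) : ∫ t in ε..1, cschCoeff (2 * k) * t ^ (2 * k) / t ^ (2 * n + 1 + 1) =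
      -(((2 : ℝ) ^ (2 * k) - 2) * (bernoulli (2 * k) : ℝ) *
          (1 - ε ^ (2 * (k : ℤ) - 2 * (n : ℤ) - 1)) /
        (((2 * k).factorial : ℝ) * (2 * (k : ℝ) - 2 * (n : ℝ) - 1))) := by
    have h₀ : (0 : ℝ) ∉ Set.uIcc ε 1 := by
      rw [Set.uIcc_of_le hε1.le]
      exact fun h => hε0.not_ge h.1
    simp_rw [mul_div_assoc]
    rw [intervalIntegral.integral_const_mul, integral_pow_div_pow (by omega) h₀, cschCoeff]
    push_cast
    rw [show 2 * (k : ℤ) - (2 * n + 1 + 1) + 1 = 2 * k - 2 * n - 1 by ring, one_zpow]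
    simp only [div_eq_mul_inv, mul_inv]
    ring
  have key := hasSum_integral_one_div_pow_mul_sinh (2 * n + 1) hε0 hε1.le
    (by linarith [pi_gt_three])
  simp_rw [hterm] at key
  exact ⟨by simpa using key.summable.neg, by rw [← key.tsum_eq, tsum_neg]⟩

/-- Series evaluation of ∫_ε^1 dt/(t^{2n+1} sinh t) for 0 < ε < 1. -/
theorem integral_csch_eps_one (n : ℕ) (hn : 0 < n) (ε : ℝ) (hε0 : 0 < ε)
    (hε1 : ε < 1) :
    Summable (fun k : ℕ =>
        ((2 : ℝ) ^ (2 * k) - 2) * (bernoulli (2 * k) : ℝ) *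
            (1 - ε ^ (2 * (k : ℤ) - 2 * (n : ℤ) - 1)) /
          (((2 * k).factorial : ℝ) * (2 * (k : ℝ) - 2 * (n : ℝ) - 1))) ∧
    (∫ t in ε..1, 1 / (t ^ (2 * n + 1) * Real.sinh t)) =
      -∑' k : ℕ,
          ((2 : ℝ) ^ (2 * k) - 2) * (bernoulli (2 * k) : ℝ) *
              (1 - ε ^ (2 * (k : ℤ) - 2 * (n : ℤ) - 1)) /
            (((2 * k).factorial : ℝ) * (2 * (k : ℝ) - 2 * (n : ℝ) - 1)) :=
  integral_csch_eps_one_general n ε hε0 hε1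
end

section
/- For all positive integers n and k, ∫_1^∞ dt/( t^{2n}·(π²k² + t²) ) = Σ_{l=1}^{n} (−1)^l/((2l−2n−1)·π^{2l}·k^{2l}) + (−1)^n/(2·π^{2n}·k^{2n+1}) − (−1)^n·arctan(1/(kπ))/(π^{2n+1}·k^{2n+1}). -/
open Real MeasureTheory Filter Finset

/-!
Write `I m = ∫_1^∞ dt / (t^m (a² + t²))`. Splitting `1 / (t^(m+2) (a² + t²))` into partial fractions
gives `a² I (m+2) = 1/(m+1) - I m`, so `(-a²)^n I (2n) = I 0 - ∑_{j<n} (-a²)^j / (2j+1)` telescopes.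
The scaling `t = a u` turns `I 0` into `(π/2 - arctan (1/a)) / a`, and the reflection `l = n - j`
puts the partial sum into the stated form, here with `a = kπ`.
-/

-- Rewriting `(-1) ^ n` as its inverse lets `field_simp` clear signs without `((-1) ^ n) ^ 2 = 1`.
lemma inv_neg_one_pow {α : Type*} [DivisionMonoid α] [HasDistribNeg α] (n : ℕ) :
    ((-1 : α) ^ n)⁻¹ = (-1) ^ n := by
  rw [← inv_pow, inv_neg_one]

lemma one_div_pow_eq_rpow_neg (t : ℝ) (m : ℕ) : 1 / t ^ m = t ^ (-(m : ℝ)) := by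
  rw [rpow_neg_natCast, zpow_neg, zpow_natCast, one_div]

theorem integrableOn_Ioi_one_one_div_pow {m : ℕ} (hm : 2 ≤ m) :
    IntegrableOn (fun t : ℝ => 1 / t ^ m) (Set.Ioi 1) := by
  have hm' : (2 : ℝ) ≤ m := by exact_mod_cast hm
  simp_rw [one_div_pow_eq_rpow_neg]
  exact integrableOn_Ioi_rpow_of_lt (by linarith) one_pos

theorem integral_Ioi_one_one_div_pow {m : ℕ} (hm : 2 ≤ m) :
    ∫ t in Set.Ioi (1 : ℝ), 1 / t ^ m = 1 / ((m : ℝ) - 1) := by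
  have hm' : (2 : ℝ) ≤ m := by exact_mod_cast hm
  simp_rw [one_div_pow_eq_rpow_neg]
  rw [integral_Ioi_rpow_of_lt (by linarith) one_pos, one_rpow, neg_div, ← div_neg, neg_add',
    neg_neg]

theorem integrableOn_Ioi_one_one_div_pow_mul_sq_add_sq (a : ℝ) (m : ℕ) :
    IntegrableOn (fun t : ℝ => 1 / (t ^ m * (a ^ 2 + t ^ 2))) (Set.Ioi 1) := by
  refine (integrableOn_Ioi_one_one_div_pow le_rfl).mono' ?_ ?_
  · refine ContinuousOn.aestronglyMeasurable (fun t ht => ?_) measurableSet_Ioi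
    have : 0 < t := one_pos.trans ht
    exact (continuousAt_const.div (by fun_prop) (by positivity)).continuousWithinAt
  · refine (ae_restrict_iff' measurableSet_Ioi).2 (Eventually.of_forall fun t (ht : 1 < t) => ?_)
    have : 0 < t := one_pos.trans ht
    have : t ^ 2 ≤ t ^ m * (a ^ 2 + t ^ 2) := by
      nlinarith [one_le_pow₀ (n := m) ht.le, sq_nonneg a, sq_nonneg t]
    rw [norm_of_nonneg (by positivity)]
    gcongr

theorem integral_Ioi_one_div_sq_add_sq {a : ℝ} (ha : 0 < a) (c : ℝ) :
    ∫ t in Set.Ioi c, 1 / (a ^ 2 + t ^ 2) = (π / 2 - arctan (c / a)) / a := by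
  have hscale : ∀ t, 1 / (a ^ 2 + t ^ 2) = a⁻¹ ^ 2 * (1 + (a⁻¹ * t) ^ 2)⁻¹ := fun t => by
    field_simp
  simp_rw [hscale, integral_const_mul, integral_comp_mul_left_Ioi (fun u => (1 + u ^ 2)⁻¹) c
    (inv_pos.2 ha), integral_Ioi_inv_one_add_sq, smul_eq_mul]
  field_simp

noncomputable def tailIntegral (a : ℝ) (m : ℕ) : ℝ :=
  ∫ t in Set.Ioi (1 : ℝ), 1 / (t ^ m * (a ^ 2 + t ^ 2))

theorem tailIntegral_zero {a : ℝ} (ha : 0 < a) :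
    tailIntegral a 0 = (π / 2 - arctan (1 / a)) / a := by
  simp only [tailIntegral, pow_zero, one_mul, integral_Ioi_one_div_sq_add_sq ha]

theorem tailIntegral_add_two {a : ℝ} (ha : a ≠ 0) (m : ℕ) :
    tailIntegral a (m + 2) = (1 / ((m : ℝ) + 1) - tailIntegral a m) / a ^ 2 := by
  have hsplit : ∀ t ∈ Set.Ioi (1 : ℝ), 1 / (t ^ (m + 2) * (a ^ 2 + t ^ 2)) =
      (1 / t ^ (m + 2) - 1 / (t ^ m * (a ^ 2 + t ^ 2))) / a ^ 2 := fun t (ht : 1 < t) => by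
    have : 0 < t := one_pos.trans ht
    field_simp
    ring
  rw [tailIntegral, setIntegral_congr_fun measurableSet_Ioi hsplit, integral_div,
    integral_sub (integrableOn_Ioi_one_one_div_pow (by omega))
      (integrableOn_Ioi_one_one_div_pow_mul_sq_add_sq a m),
    integral_Ioi_one_one_div_pow (by omega)]
  congr 3
  push_cast
  ring

theorem neg_sq_pow_mul_tailIntegral_two_mul {a : ℝ} (ha : a ≠ 0) (n : ℕ) :
    (-a ^ 2) ^ n * tailIntegral a (2 * n) =
      tailIntegral a 0 - ∑ j ∈ range n, (-a ^ 2) ^ j / (2 * j + 1) := by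
  induction n with
  | zero => simp
  | succ n ih =>
    rw [mul_add_one, tailIntegral_add_two ha, sum_range_succ, sub_add_eq_sub_sub, ← ih, pow_succ]
    push_cast
    field_simp
    ring

theorem sum_Icc_neg_one_pow_div {a : ℝ} (ha : a ≠ 0) (n : ℕ) :
    ∑ l ∈ Icc 1 n, (-1 : ℝ) ^ l / ((2 * (l : ℝ) - 2 * n - 1) * a ^ (2 * l)) =
      -(∑ j ∈ range n, (-a ^ 2) ^ j / (2 * j + 1)) / (-a ^ 2) ^ n := by
  rw [← Ico_add_one_right_eq_Icc, sum_Ico_eq_sum_range, add_tsub_cancel_right,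
    ← sum_range_reflect, ← sum_neg_distrib, sum_div]
  refine sum_congr rfl fun j hj => ?_
  obtain ⟨m, rfl⟩ : ∃ m, n = j + (m + 1) := ⟨n - (j + 1), by have := mem_range.1 hj; omega⟩
  have : (2 * (j : ℝ) + 1) ≠ 0 := by positivity
  rw [show 1 + (j + (m + 1) - 1 - j) = m + 1 by omega, ← inv_neg_one_pow, pow_add,
    neg_pow (a ^ 2), ← pow_mul]
  push_cast
  rw [show 2 * ((m : ℝ) + 1) - 2 * (j + (m + 1)) - 1 = -(2 * j + 1) by ring]
  field_simp
  ring

theorem integral_recursion_eval_general (n k : ℕ) (hk : 0 < k) :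
    (∫ t in Set.Ioi (1 : ℝ),
        1 / (t ^ (2 * n) * (Real.pi ^ 2 * (k : ℝ) ^ 2 + t ^ 2))) =
      (∑ l ∈ Finset.Icc 1 n,
          (-1 : ℝ) ^ l /
            ((2 * (l : ℝ) - 2 * (n : ℝ) - 1) * Real.pi ^ (2 * l) * (k : ℝ) ^ (2 * l))) +
        (-1 : ℝ) ^ n / (2 * Real.pi ^ (2 * n) * (k : ℝ) ^ (2 * n + 1)) -
        (-1 : ℝ) ^ n * Real.arctan (1 / ((k : ℝ) * Real.pi)) /
          (Real.pi ^ (2 * n + 1) * (k : ℝ) ^ (2 * n + 1)) := by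
  have ha : 0 < π * k := by positivity
  have hpow : (-(π * k) ^ 2) ^ n ≠ 0 := pow_ne_zero n (neg_ne_zero.2 (pow_ne_zero 2 ha.ne'))
  have htail := eq_div_of_mul_eq hpow
    ((mul_comm _ _).trans (neg_sq_pow_mul_tailIntegral_two_mul ha.ne' n))
  have hsum := sum_Icc_neg_one_pow_div ha.ne' n
  simp only [mul_pow (π : ℝ), ← mul_assoc] at hsum
  rw [hsum, ← mul_pow, ← tailIntegral, htail, tailIntegral_zero ha, ← inv_neg_one_pow,
    mul_comm (k : ℝ) π, neg_pow ((π * k) ^ 2)]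
  field_simp
  ring

/-- Closed-form evaluation of ∫_1^∞ dt/(t^{2n}(π²k²+t²)). -/
theorem integral_recursion_eval (n k : ℕ) (hn : 0 < n) (hk : 0 < k) :
    (∫ t in Set.Ioi (1 : ℝ),
        1 / (t ^ (2 * n) * (Real.pi ^ 2 * (k : ℝ) ^ 2 + t ^ 2))) =
      (∑ l ∈ Finset.Icc 1 n,
          (-1 : ℝ) ^ l /
            ((2 * (l : ℝ) - 2 * (n : ℝ) - 1) * Real.pi ^ (2 * l) * (k : ℝ) ^ (2 * l))) +
        (-1 : ℝ) ^ n / (2 * Real.pi ^ (2 * n) * (k : ℝ) ^ (2 * n + 1)) -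
        (-1 : ℝ) ^ n * Real.arctan (1 / ((k : ℝ) * Real.pi)) /
          (Real.pi ^ (2 * n + 1) * (k : ℝ) ^ (2 * n + 1)) :=
  integral_recursion_eval_general n k hk
end

section
/- For every positive integer n, Σ_{k=1}^∞ (−1)^k·arctan(1/(kπ))/k^{2n+1} = (−1)^n·π^{2n+1} · Σ_{k=n+1}^∞ (−1)^k·(2^{2k}−2)·ζ(2k)/((2k−2n−1)·(2π)^{2k}), where both series converge. -/
open Real MeasureTheory Filter Finset

/-!
Expand `arctan (1 / ((k + 1) π))` in its Taylor series. The resulting double series over `(k, m)`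
is absolutely convergent (its terms are bounded by `π ^ (-m) / (k + 1) ^ 2`), so the order of
summation may be exchanged. The inner sums are then alternating zeta values
`∑ (-1) ^ k / (k + 1) ^ N = (1 - 2 ^ (1 - N)) ζ(N)` with `N = 2 (m + n + 1)`, and collecting the
powers of `2` and `π` turns the `m`-th term into the `m`-th term of the zeta series.
-/

theorem HasSum.neg_one_pow_mul {R : Type*} [NormedRing R] [CompleteSpace R] {f : ℕ → R}
    {a b : R} (hf : HasSum f a) (hodd : HasSum (fun k => f (2 * k + 1)) b) :
    HasSum (fun k => (-1) ^ k * f k) (a - 2 * b) := by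
  obtain ⟨c, heven⟩ := hf.summable.comp_injective (mul_right_injective₀ (two_ne_zero' ℕ))
  have hc : c + b = a := (heven.even_add_odd hodd).unique hf
  rw [← hc, two_mul, add_sub_add_right_eq_sub, sub_eq_add_neg]
  refine HasSum.even_add_odd ?_ ?_
  · simpa [pow_mul, Function.comp_def] using heven
  · simpa [pow_succ, pow_mul] using hodd.neg

theorem hasSum_one_div_nat_add_one_pow_riemannZeta {N : ℕ} (hN : 1 < N) :
    HasSum (fun k : ℕ => 1 / ((k : ℂ) + 1) ^ N) (riemannZeta N) := by
  have hs : Summable fun k : ℕ => 1 / ((k : ℂ) + 1) ^ N := by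
    simpa using (summable_nat_add_iff 1).mpr
      (Complex.summable_one_div_nat_cpow.mpr (by simpa using hN : 1 < (N : ℂ).re))
  have h := zeta_eq_tsum_one_div_nat_add_one_cpow (s := N) (by simpa using hN)
  simp only [Complex.cpow_natCast] at h
  exact h ▸ hs.hasSum

theorem hasSum_neg_one_pow_div_nat_add_one_pow {N : ℕ} (hN : 1 < N) :
    HasSum (fun k : ℕ => (-1) ^ k / ((k : ℂ) + 1) ^ N) ((1 - 2 / 2 ^ N) * riemannZeta N) := by
  have hodd : HasSum (fun k : ℕ => 1 / (((2 * k + 1 : ℕ) : ℂ) + 1) ^ N)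
      (riemannZeta N / 2 ^ N) := by
    refine ((hasSum_one_div_nat_add_one_pow_riemannZeta hN).div_const _).congr_fun fun k => ?_
    rw [show ((2 * k + 1 : ℕ) : ℂ) + 1 = 2 * (k + 1) by push_cast; ring, mul_pow]
    field_simp
  rw [show (1 - 2 / 2 ^ N) * riemannZeta N = riemannZeta N - 2 * (riemannZeta N / 2 ^ N) by ring]
  exact ((hasSum_one_div_nat_add_one_pow_riemannZeta hN).neg_one_pow_mul hodd).congr_fun
    fun k => (mul_one_div _ _).symm

section ArctanDoubleSeries

variable {y : ℝ} {s : ℕ}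

lemma norm_arctan_double_series_term_le (hy : |y| < 1) (hs : 1 ≤ s) (k m : ℕ) :
    ‖(-1) ^ m * y ^ (2 * m + 1) / (2 * m + 1) *
        ((-1) ^ k / ((k : ℝ) + 1) ^ (2 * m + 1 + s))‖ ≤
      1 / ((k : ℝ) + 1) ^ 2 * |y| ^ m := by
  have hy_pow : |y| ^ (2 * m + 1) ≤ |y| ^ m :=
    pow_le_pow_of_le_one (abs_nonneg y) hy.le (by omega)
  have hk_pow : 1 / ((k : ℝ) + 1) ^ (2 * m + 1 + s) ≤ 1 / ((k : ℝ) + 1) ^ 2 :=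
    one_div_pow_le_one_div_pow_of_le (by simp) (by omega)
  calc _ = |y| ^ (2 * m + 1) / (2 * m + 1) * (1 / ((k : ℝ) + 1) ^ (2 * m + 1 + s)) := by
        simp [abs_of_pos (by positivity : (0 : ℝ) < 2 * m + 1),
          abs_of_pos (by positivity : (0 : ℝ) < k + 1)]
    _ ≤ |y| ^ m * (1 / ((k : ℝ) + 1) ^ 2) := by
        gcongr
        refine div_le_of_le_mul₀ (by positivity) (by positivity) (hy_pow.trans ?_)
        exact le_mul_of_one_le_right (by positivity) (le_add_of_nonneg_left (by positivity))
    _ = _ := mul_comm _ _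

lemma summable_arctan_double_series (hy : |y| < 1) (hs : 1 ≤ s) :
    Summable fun p : ℕ × ℕ => (-1) ^ p.2 * y ^ (2 * p.2 + 1) / (2 * p.2 + 1) *
      ((-1) ^ p.1 / ((p.1 : ℝ) + 1) ^ (2 * p.2 + 1 + s)) := by
  have hζ : Summable fun k : ℕ => 1 / ((k : ℝ) + 1) ^ 2 := by
    simpa using (summable_nat_add_iff 1).mpr (summable_one_div_nat_pow.mpr one_lt_two)
  refine .of_norm_bounded (hζ.mul_of_nonneg (summable_geometric_of_lt_one (abs_nonneg y) hy)
    (fun k => by positivity) (fun m => by positivity)) fun p => ?_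
  exact norm_arctan_double_series_term_le hy hs p.1 p.2

theorem hasSum_neg_one_pow_mul_arctan_div_pow (hy : |y| < 1) (hs : 1 ≤ s) :
    Summable (fun m : ℕ => (-1) ^ m * y ^ (2 * m + 1) / (2 * m + 1) *
        ∑' k : ℕ, (-1) ^ k / ((k : ℝ) + 1) ^ (2 * m + 1 + s)) ∧
      HasSum (fun k : ℕ => (-1) ^ k * arctan (y / (k + 1)) / ((k : ℝ) + 1) ^ s)
        (∑' m : ℕ, (-1) ^ m * y ^ (2 * m + 1) / (2 * m + 1) *
          ∑' k : ℕ, (-1) ^ k / ((k : ℝ) + 1) ^ (2 * m + 1 + s)) := by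
  have hF := (summable_arctan_double_series hy hs).hasSum
  have hk : ∀ k : ℕ, HasSum (fun m : ℕ => (-1) ^ m * y ^ (2 * m + 1) / (2 * m + 1) *
      ((-1) ^ k / ((k : ℝ) + 1) ^ (2 * m + 1 + s)))
      ((-1) ^ k * arctan (y / (k + 1)) / ((k : ℝ) + 1) ^ s) := fun k => by
    have hk0 : (0 : ℝ) < k + 1 := by positivity
    have hx : ‖y / (k + 1)‖ < 1 := by
      rw [Real.norm_eq_abs, abs_div, abs_of_pos hk0, div_lt_one hk0]
      exact hy.trans_le (by simp)
    refine (((Real.hasSum_arctan hx).mul_left ((-1) ^ k)).div_const _).congr_fun fun m => ?_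
    push_cast
    rw [div_pow, pow_add _ (2 * m + 1) s]
    field_simp
  have hm : ∀ m : ℕ, HasSum (fun k : ℕ => (-1) ^ m * y ^ (2 * m + 1) / (2 * m + 1) *
      ((-1) ^ k / ((k : ℝ) + 1) ^ (2 * m + 1 + s)))
      ((-1) ^ m * y ^ (2 * m + 1) / (2 * m + 1) *
        ∑' k : ℕ, (-1) ^ k / ((k : ℝ) + 1) ^ (2 * m + 1 + s)) := fun m => by
    rw [← tsum_mul_left]
    exact ((summable_arctan_double_series hy hs).prod_symm.prod_factor m).hasSum
  have hmA := ((Equiv.prodComm ℕ ℕ).hasSum_iff.mpr hF).prod_fiberwise hm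
  exact ⟨hmA.summable, hmA.tsum_eq ▸ hF.prod_fiberwise hk⟩

end ArctanDoubleSeries

noncomputable def zetaSeriesTerm (n k : ℕ) : ℂ :=
  (-1 : ℂ) ^ (k + n + 1) * ((2 : ℂ) ^ (2 * (k + n + 1)) - 2) *
      riemannZeta (2 * ((k : ℂ) + (n : ℂ) + 1)) /
    ((2 * ((k : ℂ) + (n : ℂ) + 1) - 2 * (n : ℂ) - 1) *
      (2 * (Real.pi : ℂ)) ^ (2 * (k + n + 1)))

lemma ofReal_arctan_coeff_mul_tsum_eq_neg_zetaSeriesTerm (n m : ℕ) :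
    (((-1 : ℝ) ^ m * π⁻¹ ^ (2 * m + 1) / (2 * m + 1) *
        ∑' k : ℕ, (-1 : ℝ) ^ k / ((k : ℝ) + 1) ^ (2 * m + 1 + (2 * n + 1)) : ℝ) : ℂ) =
      -((-1) ^ n * (π : ℂ) ^ (2 * n + 1) * zetaSeriesTerm n m) := by
  rw [show 2 * m + 1 + (2 * n + 1) = 2 * (m + n + 1) by ring]
  push_cast
  rw [(hasSum_neg_one_pow_div_nat_add_one_pow (by omega)).tsum_eq, zetaSeriesTerm]
  push_cast
  have hπ : (π : ℂ) ≠ 0 := Complex.ofReal_ne_zero.mpr pi_ne_zero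
  have hm : (2 * (m : ℂ) + 1) ≠ 0 := mod_cast (by omega : 2 * m + 1 ≠ 0)
  rw [show (2 * ((m : ℂ) + n + 1) - 2 * n - 1) = 2 * m + 1 by ring,
    show 2 * (m + n + 1) = (2 * m + 1) + (2 * n + 1) by ring, mul_pow, inv_pow,
    pow_add (π : ℂ) (2 * m + 1), pow_succ (-1 : ℂ) (m + n), pow_add (-1 : ℂ) m n]
  rcases neg_one_pow_eq_or ℂ n with h | h <;> rw [h] <;> field_simp

theorem arctan_series_eval_general (n : ℕ) :
    Summable (fun k : ℕ =>
        (-1 : ℝ) ^ (k + 1) * Real.arctan (1 / (((k : ℝ) + 1) * Real.pi)) /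
          ((k : ℝ) + 1) ^ (2 * n + 1)) ∧
    Summable (fun k : ℕ =>
        (-1 : ℂ) ^ (k + n + 1) * ((2 : ℂ) ^ (2 * (k + n + 1)) - 2) *
            riemannZeta (2 * ((k : ℂ) + (n : ℂ) + 1)) /
          ((2 * ((k : ℂ) + (n : ℂ) + 1) - 2 * (n : ℂ) - 1) *
            (2 * (Real.pi : ℂ)) ^ (2 * (k + n + 1)))) ∧
    ((∑' k : ℕ,
        (-1 : ℝ) ^ (k + 1) * Real.arctan (1 / (((k : ℝ) + 1) * Real.pi)) /
          ((k : ℝ) + 1) ^ (2 * n + 1) : ℝ) : ℂ) =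
      (-1) ^ n * (Real.pi : ℂ) ^ (2 * n + 1) *
        ∑' k : ℕ,
          (-1 : ℂ) ^ (k + n + 1) * ((2 : ℂ) ^ (2 * (k + n + 1)) - 2) *
              riemannZeta (2 * ((k : ℂ) + (n : ℂ) + 1)) /
            ((2 * ((k : ℂ) + (n : ℂ) + 1) - 2 * (n : ℂ) - 1) *
              (2 * (Real.pi : ℂ)) ^ (2 * (k + n + 1))) := by
  have hy : |π⁻¹| < 1 := by
    rw [abs_inv, abs_of_pos pi_pos]
    exact inv_lt_one_of_one_lt₀ (by linarith [pi_gt_three])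
  obtain ⟨hcoeff, hsum⟩ := hasSum_neg_one_pow_mul_arctan_div_pow hy (s := 2 * n + 1) (by omega)
  have hlhs := hsum.neg.congr_fun fun k : ℕ => show
      (-1 : ℝ) ^ (k + 1) * arctan (1 / ((k + 1) * π)) / ((k : ℝ) + 1) ^ (2 * n + 1) =
        -((-1) ^ k * arctan (π⁻¹ / (k + 1)) / ((k : ℝ) + 1) ^ (2 * n + 1)) by
    rw [show 1 / ((k + 1) * π) = π⁻¹ / (k + 1) by field_simp, pow_succ]
    ring
  have hrhs := (Complex.hasSum_ofReal.mpr hcoeff.hasSum).neg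
  simp only [ofReal_arctan_coeff_mul_tsum_eq_neg_zetaSeriesTerm, neg_neg] at hrhs
  have hc : (-1) ^ n * (π : ℂ) ^ (2 * n + 1) ≠ 0 := by simp [pi_ne_zero]
  refine ⟨hlhs.summable, (summable_mul_left_iff hc).mp hrhs.summable, ?_⟩
  rw [hlhs.tsum_eq, Complex.ofReal_neg, ← hrhs.tsum_eq, tsum_mul_left]
  rfl

/-- Evaluation of the arctan-series Σ_{k≥1} (−1)^k arctan(1/(kπ))/k^{2n+1} as a
zeta-series Σ_{k≥n+1} (−1)^k (2^{2k}−2) ζ(2k)/((2k−2n−1)(2π)^{2k}). -/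
theorem arctan_series_eval (n : ℕ) (hn : 0 < n) :
    Summable (fun k : ℕ =>
        (-1 : ℝ) ^ (k + 1) * Real.arctan (1 / (((k : ℝ) + 1) * Real.pi)) /
          ((k : ℝ) + 1) ^ (2 * n + 1)) ∧
    Summable (fun k : ℕ =>
        (-1 : ℂ) ^ (k + n + 1) * ((2 : ℂ) ^ (2 * (k + n + 1)) - 2) *
            riemannZeta (2 * ((k : ℂ) + (n : ℂ) + 1)) /
          ((2 * ((k : ℂ) + (n : ℂ) + 1) - 2 * (n : ℂ) - 1) *
            (2 * (Real.pi : ℂ)) ^ (2 * (k + n + 1)))) ∧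
    ((∑' k : ℕ,
        (-1 : ℝ) ^ (k + 1) * Real.arctan (1 / (((k : ℝ) + 1) * Real.pi)) /
          ((k : ℝ) + 1) ^ (2 * n + 1) : ℝ) : ℂ) =
      (-1) ^ n * (Real.pi : ℂ) ^ (2 * n + 1) *
        ∑' k : ℕ,
          (-1 : ℂ) ^ (k + n + 1) * ((2 : ℂ) ^ (2 * (k + n + 1)) - 2) *
              riemannZeta (2 * ((k : ℂ) + (n : ℂ) + 1)) /
            ((2 * ((k : ℂ) + (n : ℂ) + 1) - 2 * (n : ℂ) - 1) *
              (2 * (Real.pi : ℂ)) ^ (2 * (k + n + 1))) :=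
  arctan_series_eval_general n
end

section
/- For every real s > −1, the function t ↦ t·e^{−st}/sinh t is integrable on (0, ∞) and ∫_0^∞ (t/sinh t)·e^{−st} dt = (1/2)·ζ(2, (s+1)/2) = (1/2)·Σ_{k=0}^∞ ( k + (s+1)/2 )^{−2}. -/
open Real MeasureTheory

/-!
Expanding `1 / sinh t = 2 ∑ₖ e^{-(2k+1)t}` turns the integrand into the series
`∑ₖ 2 t e^{-2(k+a)t}` with `a = (s+1)/2`, whose terms are nonnegative and integrate to
`1 / (2 (k+a)²)`; so sum and integral may be interchanged. Integrability needs no separate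
bound: the resulting integral is positive, and a non-integrable function has Bochner integral `0`.
-/

lemma integral_mul_exp_neg_mul_Ioi {c : ℝ} (hc : 0 < c) :
    ∫ t in Set.Ioi (0 : ℝ), t * exp (-(c * t)) = 1 / c ^ 2 := by
  have h := integral_rpow_mul_exp_neg_mul_Ioi two_pos hc
  norm_num [Real.rpow_two, div_pow] at h
  simpa [one_div] using h

lemma integrableOn_mul_exp_neg_mul_Ioi {c : ℝ} (hc : 0 < c) :
    IntegrableOn (fun t : ℝ => t * exp (-(c * t))) (Set.Ioi 0) :=
  .of_integral_ne_zero (by rw [integral_mul_exp_neg_mul_Ioi hc]; positivity)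

lemma hasSum_inv_sinh {t : ℝ} (ht : 0 < t) :
    HasSum (fun k : ℕ => 2 * exp (-((2 * k + 1) * t))) (sinh t)⁻¹ := by
  have hq : exp (-(2 * t)) < 1 := exp_lt_one_iff.2 (by linarith)
  have hsinh : sinh t = exp t * (1 - exp (-(2 * t))) / 2 := by
    rw [sinh_eq, mul_sub, mul_one, ← exp_add]
    ring_nf
  have hterm (k : ℕ) : 2 * exp (-((2 * k + 1) * t)) = 2 * exp (-t) * exp (-(2 * t)) ^ k := by
    rw [← exp_nat_mul, mul_assoc, ← exp_add]
    ring_nf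
  have hsum : (sinh t)⁻¹ = 2 * exp (-t) * (1 - exp (-(2 * t)))⁻¹ := by
    rw [hsinh, inv_div]
    field_simp
    rw [← exp_add, add_neg_cancel, exp_zero]
  simpa only [hterm, hsum] using
    (hasSum_geometric_of_lt_one (exp_nonneg _) hq).mul_left (2 * exp (-t))

lemma summable_one_div_nat_add_sq (a : ℝ) : Summable fun k : ℕ => 1 / ((k : ℝ) + a) ^ 2 := by
  simpa [Real.rpow_two, sq_abs] using (Real.summable_one_div_nat_add_rpow a 2).2 one_lt_two

lemma hasSum_integral_mul_div_sinh_mul_exp {s : ℝ} (hs : -1 < s) :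
    HasSum (fun k : ℕ => 1 / 2 * (1 / ((k : ℝ) + (s + 1) / 2) ^ 2))
      (∫ t in Set.Ioi (0 : ℝ), t / sinh t * exp (-s * t)) := by
  have ha : 0 < (s + 1) / 2 := by linarith
  set a := (s + 1) / 2
  set F : ℕ → ℝ → ℝ := fun k t => 2 * (t * exp (-(2 * (k + a) * t)))
  have hc (k : ℕ) : 0 < 2 * ((k : ℝ) + a) := by positivity
  have hF_int (k : ℕ) : IntegrableOn (F k) (Set.Ioi 0) :=
    (integrableOn_mul_exp_neg_mul_Ioi (hc k)).const_mul 2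
  have hF_integral (k : ℕ) : ∫ t in Set.Ioi 0, F k t = 1 / 2 * (1 / ((k : ℝ) + a) ^ 2) := by
    rw [integral_const_mul, integral_mul_exp_neg_mul_Ioi (hc k)]
    field_simp
  have hF_norm (k : ℕ) : ∫ t in Set.Ioi 0, ‖F k t‖ = ∫ t in Set.Ioi 0, F k t :=
    setIntegral_congr_fun measurableSet_Ioi fun t (ht : 0 < t) => norm_of_nonneg (by positivity)
  have hF_sum (t : ℝ) (ht : 0 < t) : HasSum (F · t) (t / sinh t * exp (-s * t)) := by
    have hterm (k : ℕ) : t * exp (-s * t) * (2 * exp (-((2 * k + 1) * t))) = F k t := by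
      simp only [F, a]
      rw [mul_left_comm, mul_assoc, ← exp_add]
      ring_nf
    rw [div_mul_eq_mul_div, div_eq_mul_inv]
    simpa only [hterm] using (hasSum_inv_sinh ht).mul_left (t * exp (-s * t))
  rw [setIntegral_congr_fun measurableSet_Ioi fun t ht => (hF_sum t ht).tsum_eq.symm]
  have h := hasSum_integral_of_summable_integral_norm hF_int
    (by simpa only [hF_norm, hF_integral] using (summable_one_div_nat_add_sq a).mul_left (1 / 2))
  rwa [funext hF_integral] at h

/-- Laplace transform of t/sinh t: ∫_0^∞ (t/sinh t) e^{−st} dt = (1/2) ζ(2,(s+1)/2),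
where ζ(2,a) = Σ_{k=0}^∞ (k+a)^{-2} is the Hurwitz zeta function at exponent 2. -/
theorem laplace_t_csch (s : ℝ) (hs : -1 < s) :
    IntegrableOn (fun t : ℝ => t * Real.exp (-s * t) / Real.sinh t)
      (Set.Ioi (0 : ℝ)) ∧
    (∫ t in Set.Ioi (0 : ℝ), t / Real.sinh t * Real.exp (-s * t)) =
      (1 / 2) * ∑' k : ℕ, 1 / ((k : ℝ) + (s + 1) / 2) ^ 2 := by
  have hsum := hasSum_integral_mul_div_sinh_mul_exp hs
  have ha : 0 < (s + 1) / 2 := by linarith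
  have hpos : 0 < ∫ t in Set.Ioi (0 : ℝ), t / sinh t * exp (-s * t) :=
    hsum.tsum_eq ▸ hsum.summable.tsum_pos (fun k => by positivity) 0 (by simpa using pow_pos ha 2)
  have hint : IntegrableOn (fun t => t / sinh t * exp (-s * t)) (Set.Ioi 0) :=
    Integrable.of_integral_ne_zero hpos.ne'
  refine ⟨by simpa only [mul_div_right_comm] using hint, ?_⟩
  rw [← hsum.tsum_eq, tsum_mul_left]
end

section
/- For every integer k ≥ 1, (2k)! · Σ_{l=1}^{k} 2^{2l}·B_{2l}/((2l)!·(2k−2l)!) = (2k−1) − (2^{2k}−2)·B_{2k}. -/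
open Real Finset

/-!
With `B(t) = t / (eᵗ - 1) = ∑ Bₙ tⁿ / n!` one has `B(2t) (eᵗ + 1) = 2 B(t)`. Comparing the
coefficients of `tⁿ` gives `∑ᵢ (n choose i) 2ⁱ Bᵢ = (2 - 2ⁿ) Bₙ`. For `n = 2k` the odd-index
terms vanish except `i = 1`, where `B₁ = -1/2`; together with `i = 0` it contributes `1 - 2k`.
-/

open PowerSeries in
theorem rescale_two_bernoulliPowerSeries_mul_exp_add_one :
    rescale (2 : ℚ) (bernoulliPowerSeries ℚ) * (exp ℚ + 1) =
      C (2 : ℚ) * bernoulliPowerSeries ℚ := by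
  have hB := bernoulliPowerSeries_mul_exp_sub_one ℚ
  have hne : exp ℚ - 1 ≠ 0 := fun h => X_ne_zero (by rw [← hB, h, mul_zero])
  have hexp : exp ℚ ^ 2 = rescale (2 : ℚ) (exp ℚ) := by
    rw [exp_pow_eq_rescale_exp]; norm_num
  apply mul_right_cancel₀ hne
  calc rescale (2 : ℚ) (bernoulliPowerSeries ℚ) * (exp ℚ + 1) * (exp ℚ - 1)
      = rescale (2 : ℚ) (bernoulliPowerSeries ℚ * (exp ℚ - 1)) := by
        rw [map_mul, map_sub, map_one, ← hexp]; ring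
    _ = C (2 : ℚ) * bernoulliPowerSeries ℚ * (exp ℚ - 1) := by
        rw [hB, rescale_X, mul_assoc, hB]

theorem sum_choose_mul_two_pow_mul_bernoulli (n : ℕ) :
    ∑ i ∈ range (n + 1), (n.choose i : ℚ) * 2 ^ i * bernoulli i = (2 - 2 ^ n) * bernoulli n := by
  have h := congrArg (PowerSeries.coeff n) rescale_two_bernoulliPowerSeries_mul_exp_add_one
  rw [mul_add, mul_one, map_add, ← eq_sub_iff_add_eq, PowerSeries.coeff_mul,
    PowerSeries.coeff_C_mul, Nat.sum_antidiagonal_eq_sum_range_succ_mk] at h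
  simp only [PowerSeries.coeff_rescale, bernoulliPowerSeries, PowerSeries.coeff_mk,
    PowerSeries.coeff_exp, Algebra.algebraMap_self, RingHom.id_apply] at h
  have hn : (n.factorial : ℚ) ≠ 0 := mod_cast n.factorial_ne_zero
  calc ∑ i ∈ range (n + 1), (n.choose i : ℚ) * 2 ^ i * bernoulli i
      = n.factorial * ∑ i ∈ range (n + 1),
          2 ^ i * (bernoulli i / i.factorial) * (1 / (n - i).factorial) := by
        rw [mul_sum]
        refine sum_congr rfl fun i hi => ?_
        rw [Nat.cast_choose ℚ (Nat.lt_succ_iff.mp (mem_range.mp hi))]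
        field_simp
    _ = (2 - 2 ^ n) * bernoulli n := by
        rw [h]; field_simp

theorem sum_range_two_mul_add_two_of_odd {M : Type*} [AddCommMonoid M] (f : ℕ → M)
    (hf : ∀ i, Odd i → 1 < i → f i = 0) (k : ℕ) :
    ∑ i ∈ range (2 * k + 2), f i = f 0 + f 1 + ∑ l ∈ Icc 1 k, f (2 * l) := by
  induction k with
  | zero => simp [sum_range_succ]
  | succ k ih =>
    rw [show 2 * (k + 1) + 2 = 2 * k + 2 + 1 + 1 by ring, sum_range_succ, sum_range_succ, ih,
      sum_Icc_succ_top (by omega), hf (2 * k + 3) ⟨k + 1, by ring⟩ (by omega),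
      show 2 * k + 2 = 2 * (k + 1) by ring]
    simp only [add_zero, add_assoc]

theorem sum_choose_two_mul_mul_two_pow_mul_bernoulli (k : ℕ) :
    ∑ l ∈ Icc 1 k, ((2 * k).choose (2 * l) : ℚ) * 2 ^ (2 * l) * bernoulli (2 * l) =
      (2 * k - 1) - (2 ^ (2 * k) - 2) * bernoulli (2 * k) := by
  have h := sum_range_two_mul_add_two_of_odd
    (fun i => ((2 * k).choose i : ℚ) * 2 ^ i * bernoulli i)
    (fun i hi hi1 => by simp only [bernoulli_eq_zero_of_odd hi hi1, mul_zero]) k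
  rw [sum_range_succ, sum_choose_mul_two_pow_mul_bernoulli, Nat.choose_succ_self] at h
  simp only [Nat.choose_zero_right, Nat.choose_one_right, bernoulli_zero, bernoulli_one] at h
  push_cast at h
  linear_combination -h

theorem choose_mul_eq_factorial_mul_div {K : Type*} [Field K] [CharZero K] {n m : ℕ} (h : m ≤ n)
    (x : K) : (n.choose m : K) * x = n.factorial * (x / (m.factorial * (n - m).factorial)) := by
  rw [Nat.cast_choose K h]
  field_simp

theorem bernoulli_sum_identity_two_general (k : ℕ) :
    ((2 * k).factorial : ℝ) *
        ∑ l ∈ Finset.Icc 1 k,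
          (2 : ℝ) ^ (2 * l) * (bernoulli (2 * l) : ℝ) /
            (((2 * l).factorial : ℝ) * ((2 * k - 2 * l).factorial : ℝ)) =
      (2 * (k : ℝ) - 1) - ((2 : ℝ) ^ (2 * k) - 2) * (bernoulli (2 * k) : ℝ) := by
  have h := congrArg (Rat.cast (K := ℝ)) (sum_choose_two_mul_mul_two_pow_mul_bernoulli k)
  push_cast at h
  rw [← h, mul_sum]
  refine sum_congr rfl fun l hl => ?_
  rw [mul_assoc, choose_mul_eq_factorial_mul_div (by grind)]

/-- Bernoulli-number summation identity:
(2k)! Σ_{l=1}^{k} 2^{2l} B_{2l}/((2l)!(2k−2l)!) = (2k−1) − (2^{2k}−2) B_{2k}. -/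
theorem bernoulli_sum_identity_two (k : ℕ) (hk : 1 ≤ k) :
    ((2 * k).factorial : ℝ) *
        ∑ l ∈ Finset.Icc 1 k,
          (2 : ℝ) ^ (2 * l) * (bernoulli (2 * l) : ℝ) /
            (((2 * l).factorial : ℝ) * ((2 * k - 2 * l).factorial : ℝ)) =
      (2 * (k : ℝ) - 1) - ((2 : ℝ) ^ (2 * k) - 2) * (bernoulli (2 * k) : ℝ) :=
  bernoulli_sum_identity_two_general k
end
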